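/- arXiv:2605.05618 — 7 statements merged into one kernel-verified Lean document; each statement's English description precedes it below -/
import Mathlib

section
/- Let b = 1/(1−p), fix r ≥ 2 and ε ∈ (0,1), and let α_ε = (1−ε)·(r!·log_b n)^{1/(r−1)}. Then with probability tending to 1 as n → ∞, the random hypergraph H_r(n,p) contains an independent set of size at least α_ε. -/
/-!
Second moment method. Let `k = ⌈α_ε⌉` and let `X` count the independent `k`-sets. Two `k`-sets
meeting in `i` vertices are both independent with probability `(1-p)^(2 C(k,r) - C(i,r))`; comparing
the number of such pairs with `C(n,k)^2` bounds the contribution of overlap `i ≥ r` to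
`E[X^2] / E[X]^2` by `y^i`, where `y = k^2 b^(C(k,r)/k) / (n-k)`. Cauchy–Schwarz,
`P(X > 0) E[X^2] ≥ E[X]^2`, then gives `P(X > 0) ≥ 1 - k y^2`. Finally
`k ≤ (1 - ε/2) (r! log_b n)^(1/(r-1))` forces `b^(C(k,r)/k) ≤ n^(1-ε/2)`, and `k = O(log n)`, so
`k y^2 = O((log n)^5 n^(-ε)) → 0`.
-/

open MeasureTheory Filter Finset Topology
open scoped ENNReal NNReal Nat

theorem sq_sum_measureReal_le_measureReal_biUnion_mul {Ω ι : Type*} [MeasurableSpace Ω]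
    (μ : Measure Ω) [IsFiniteMeasure μ] (s : Finset ι) {A : ι → Set Ω}
    (hA : ∀ i, MeasurableSet (A i)) :
    (∑ i ∈ s, μ.real (A i)) ^ 2 ≤
      μ.real (⋃ i ∈ s, A i) * ∑ i ∈ s, ∑ j ∈ s, μ.real (A i ∩ A j) := by
  set U := ⋃ i ∈ s, A i
  have hU : MeasurableSet U := s.measurableSet_biUnion fun i _ => hA i
  have hind : ∀ {B : Set Ω}, MeasurableSet B → Integrable (B.indicator (1 : Ω → ℝ)) μ :=
    fun hB => (integrable_const 1).indicator hB
  have hX : Integrable (fun ω => ∑ i ∈ s, (A i).indicator (1 : Ω → ℝ) ω) μ :=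
    integrable_finsetSum _ fun i _ => hind (hA i)
  have hAA : ∀ i ∈ s, Integrable (fun ω => ∑ j ∈ s, (A i ∩ A j).indicator (1 : Ω → ℝ) ω) μ :=
    fun i _ => integrable_finsetSum _ fun j _ => hind ((hA i).inter (hA j))
  -- `X = ∑ 1_{A i}` vanishes off `U`
  have hexpand : ∀ t : ℝ, ∀ ω, (t * U.indicator 1 ω - ∑ i ∈ s, (A i).indicator 1 ω) ^ 2 =
      t ^ 2 * U.indicator 1 ω - 2 * t * ∑ i ∈ s, (A i).indicator 1 ω +
        ∑ i ∈ s, ∑ j ∈ s, (A i ∩ A j).indicator (1 : Ω → ℝ) ω := by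
    intro t ω
    simp only [Set.inter_indicator_one, Pi.mul_apply, ← Finset.sum_mul_sum]
    by_cases hω : ω ∈ U
    · simp only [Set.indicator_of_mem hω, Pi.one_apply]; ring
    · have h0 : ∀ i ∈ s, (A i).indicator (1 : Ω → ℝ) ω = 0 := fun i hi =>
        Set.indicator_of_notMem (fun h => hω (Set.mem_biUnion hi h)) _
      simp only [Set.indicator_of_notMem hω, Finset.sum_eq_zero h0]; ring
  -- Cauchy–Schwarz: the discriminant of the nonnegative quadratic `t ↦ ∫ (t 1_U - X)^2` is `≤ 0`.
  have hquad : ∀ t : ℝ, 0 ≤ μ.real U * (t * t) + (-2 * ∑ i ∈ s, μ.real (A i)) * t +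
      ∑ i ∈ s, ∑ j ∈ s, μ.real (A i ∩ A j) := by
    intro t
    have h : 0 ≤ ∫ ω, (t * U.indicator 1 ω - ∑ i ∈ s, (A i).indicator (1 : Ω → ℝ) ω) ^ 2 ∂μ :=
      integral_nonneg fun ω => sq_nonneg _
    simp only [hexpand] at h
    have hlin : Integrable
        (fun ω => t ^ 2 * U.indicator 1 ω - 2 * t * ∑ i ∈ s, (A i).indicator 1 ω) μ :=
      ((hind hU).const_mul _).sub (hX.const_mul _)
    rw [integral_add hlin (integrable_finsetSum _ hAA),
      integral_sub ((hind hU).const_mul _) (hX.const_mul _), integral_const_mul,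
      integral_const_mul, integral_indicator_one hU, integral_finsetSum _ fun i _ => hind (hA i),
      integral_finsetSum _ hAA] at h
    simp only [integral_finsetSum _ fun j _ => hind ((hA _).inter (hA j)),
      integral_indicator_one ((hA _).inter (hA _)), integral_indicator_one (hA _)] at h
    linarith
  have := discrim_le_zero hquad
  rw [discrim] at this
  linarith

theorem tendsto_measure_of_one_sub_le {ι : Type*} {l : Filter ι} {Ω : ι → Type*}
    [∀ i, MeasurableSpace (Ω i)] (μ : ∀ i, Measure (Ω i)) [∀ i, IsProbabilityMeasure (μ i)]
    {s : ∀ i, Set (Ω i)} {ε : ι → ℝ} (hε : Tendsto ε l (𝓝 0))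
    (h : ∀ᶠ i in l, 1 - ε i ≤ (μ i).real (s i)) :
    Tendsto (fun i => μ i (s i)) l (𝓝 1) := by
  have hreal : Tendsto (fun i => (μ i).real (s i)) l (𝓝 1) :=
    tendsto_of_tendsto_of_tendsto_of_le_of_le' (by simpa using hε.const_sub 1)
      tendsto_const_nhds h (Eventually.of_forall fun i => measureReal_le_one)
  simpa [measureReal_def, ENNReal.ofReal_toReal (measure_ne_top _ _)] using
    ENNReal.tendsto_ofReal hreal

noncomputable def bernoulliPi (ι : Type*) [Fintype ι] (q : ℝ≥0) (hq : q ≤ 1) : Measure (ι → Bool) :=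
  Measure.pi fun _ => (PMF.bernoulli q hq).toMeasure

instance {ι : Type*} [Fintype ι] {q : ℝ≥0} {hq : q ≤ 1} :
    IsProbabilityMeasure (bernoulliPi ι q hq) := by
  unfold bernoulliPi; infer_instance

theorem bernoulliPi_real_forall_eq_false {ι : Type*} [Fintype ι] {q : ℝ≥0} {hq : q ≤ 1}
    (A : Finset ι) :
    (bernoulliPi ι q hq).real {E | ∀ e ∈ A, E e = false} = (1 - q : ℝ) ^ #A := by
  classical
  have hset : {E : ι → Bool | ∀ e ∈ A, E e = false} =
      Set.univ.pi fun e => if e ∈ A then {false} else Set.univ := by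
    ext E; simp only [Set.mem_ofPred_eq, Set.mem_univ_pi]
    refine forall_congr' fun e => ?_
    split_ifs with he <;> simp [he]
  have hfalse : (PMF.bernoulli q hq).toMeasure {false} = ((1 - q : ℝ≥0) : ℝ≥0∞) := by
    rw [PMF.toMeasure_apply_singleton _ _ (measurableSet_singleton _), PMF.bernoulli_apply]
    simp
  rw [measureReal_def, bernoulliPi, hset, Measure.pi_pi]
  simp only [apply_ite, hfalse, measure_univ]
  rw [prod_ite_mem, univ_inter, prod_const, ENNReal.toReal_pow, ENNReal.coe_toReal,
    NNReal.coe_sub hq, NNReal.coe_one]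

theorem Finset.powersetCard_inter {α : Type*} [DecidableEq α] (r : ℕ) (s t : Finset α) :
    powersetCard r s ∩ powersetCard r t = powersetCard r (s ∩ t) := by
  ext u; simp only [mem_inter, mem_powersetCard, subset_inter_iff]; tauto

theorem Nat.choose_sub_mul_pow_le (n k : ℕ) {i : ℕ} (hi : i ≤ k) :
    n.choose (k - i) * (n - k) ^ i ≤ n.choose k * k ^ i := by
  induction i with
  | zero => simp
  | succ i ih =>
    have hstep : n.choose (k - (i + 1)) * (n - k) ≤ n.choose (k - i) * k := by
      have h := Nat.choose_succ_right_eq n (k - (i + 1))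
      rw [show k - (i + 1) + 1 = k - i by omega] at h
      calc n.choose (k - (i + 1)) * (n - k)
          ≤ n.choose (k - (i + 1)) * (n - (k - (i + 1))) := by gcongr; omega
        _ = n.choose (k - i) * (k - i) := h.symm
        _ ≤ n.choose (k - i) * k := by gcongr; omega
    calc n.choose (k - (i + 1)) * (n - k) ^ (i + 1)
        = n.choose (k - (i + 1)) * (n - k) * (n - k) ^ i := by ring
      _ ≤ n.choose (k - i) * k * (n - k) ^ i := by gcongr
      _ = k * (n.choose (k - i) * (n - k) ^ i) := by ring
      _ ≤ k * (n.choose k * k ^ i) := Nat.mul_le_mul_left k (ih (by omega))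
      _ = n.choose k * k ^ (i + 1) := by ring

theorem Nat.mul_choose_le_mul_choose {i k r : ℕ} (hik : i ≤ k) (hr : 1 ≤ r) :
    k * i.choose r ≤ i * k.choose r := by
  obtain ⟨s, rfl⟩ : ∃ s, r = s + 1 := ⟨r - 1, by omega⟩
  rcases i with _ | j
  · simp
  obtain ⟨l, rfl⟩ : ∃ l, k = l + 1 := ⟨k - 1, by omega⟩
  refine Nat.le_of_mul_le_mul_right ?_ s.succ_pos
  calc (l + 1) * (j + 1).choose (s + 1) * (s + 1)
      = (j + 1) * ((l + 1) * j.choose s) := by rw [mul_assoc, ← Nat.add_one_mul_choose_eq]; ring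
    _ ≤ (j + 1) * ((l + 1) * l.choose s) := by gcongr; omega
    _ = (j + 1) * (l + 1).choose (s + 1) * (s + 1) := by rw [Nat.add_one_mul_choose_eq]; ring

theorem card_filter_card_inter_eq_le {V : Type*} [Fintype V] [DecidableEq V] (S : Finset V)
    (k i : ℕ) :
    #{T ∈ powersetCard k univ | #(S ∩ T) = i} ≤
      (#S).choose i * (Fintype.card V).choose (k - i) := by
  rw [← card_powersetCard, ← card_univ (α := V), ← card_powersetCard, ← card_product]
  refine card_le_card_of_injOn (fun T => (S ∩ T, T \ S)) (fun T hT => ?_) (fun T₁ _ T₂ _ h => ?_)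
  · simp only [coe_filter, mem_powersetCard, Set.mem_ofPred_eq] at hT
    have h := card_sdiff_add_card_inter T S
    rw [inter_comm T S] at h
    simp only [coe_product, Set.mem_prod, mem_coe, mem_powersetCard]
    exact ⟨⟨inter_subset_left, hT.2⟩, subset_univ _, by omega⟩
  · simp only [Prod.mk.injEq] at h
    rw [← sdiff_union_inter T₁ S, ← sdiff_union_inter T₂ S, inter_comm T₁, inter_comm T₂, h.1, h.2]

/-- `overlapRatio b n k r ^ i` bounds `C(k,i) C(n,k-i) b^C(i,r) / C(n,k)`, the weight of the pairs
of `k`-sets meeting in `i` vertices in the second moment. -/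
noncomputable def overlapRatio (b : ℝ) (n k r : ℕ) : ℝ :=
  k ^ 2 * b ^ ((k.choose r : ℝ) / k) / (n - k)

theorem overlapRatio_nonneg {b : ℝ} (hb : 0 ≤ b) {n k : ℕ} (hkn : k ≤ n) (r : ℕ) :
    0 ≤ overlapRatio b n k r := by
  unfold overlapRatio
  have : (k : ℝ) ≤ n := by exact_mod_cast hkn
  have := Real.rpow_nonneg hb ((k.choose r : ℝ) / k)
  positivity

theorem choose_mul_choose_mul_pow_le {b : ℝ} (hb : 1 ≤ b) {n k r i : ℕ} (hkn : k < n)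
    (hr : 1 ≤ r) (hik : i ≤ k) :
    (k.choose i * n.choose (k - i) : ℝ) * b ^ i.choose r ≤
      n.choose k * overlapRatio b n k r ^ i := by
  have hnk : (0 : ℝ) < n - k := by rw [sub_pos]; exact_mod_cast hkn
  have h₁ : (k.choose i : ℝ) ≤ k ^ i := by exact_mod_cast Nat.choose_le_pow k i
  have h₂ : (n.choose (k - i) : ℝ) * (n - k) ^ i ≤ n.choose k * k ^ i := by
    have := (Nat.cast_le (α := ℝ)).2 (Nat.choose_sub_mul_pow_le n k hik)
    push_cast [Nat.cast_sub hkn.le] at this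
    exact this
  have h₃ : b ^ i.choose r ≤ (b ^ ((k.choose r : ℝ) / k)) ^ i := by
    rw [← Real.rpow_natCast, ← Real.rpow_natCast, ← Real.rpow_mul (by positivity)]
    refine Real.rpow_le_rpow_of_exponent_le hb ?_
    rcases Nat.eq_zero_or_pos k with rfl | hk
    · simp_all [Nat.choose_eq_zero_of_lt hr]
    rw [div_mul_eq_mul_div, le_div_iff₀ (by positivity), mul_comm, mul_comm ((k.choose r : ℕ) : ℝ)]
    exact_mod_cast Nat.mul_choose_le_mul_choose hik hr
  calc (k.choose i * n.choose (k - i) : ℝ) * b ^ i.choose r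
      ≤ k ^ i * (n.choose k * k ^ i / (n - k) ^ i) * (b ^ ((k.choose r : ℝ) / k)) ^ i := by
        gcongr
        rw [le_div_iff₀ (by positivity)]; exact h₂
    _ = n.choose k * overlapRatio b n k r ^ i := by
        rw [overlapRatio, div_pow, mul_pow, ← pow_mul]; field_simp; ring

theorem sum_pow_choose_card_inter_le {V : Type*} [Fintype V] [DecidableEq V] {b : ℝ} (hb : 1 ≤ b)
    {k r : ℕ} (hr : 2 ≤ r) (hkn : k < Fintype.card V)
    (hy : overlapRatio b (Fintype.card V) k r ≤ 1) {S : Finset V} (hS : #S = k) :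
    ∑ T ∈ powersetCard k univ, b ^ (#(S ∩ T)).choose r ≤
      (Fintype.card V).choose k * (1 + k * overlapRatio b (Fintype.card V) k r ^ 2) := by
  set n := Fintype.card V
  set y := overlapRatio b n k r
  have hy0 : 0 ≤ y := overlapRatio_nonneg (by linarith) hkn.le r
  set 𝒮 := powersetCard k (univ : Finset V)
  have h𝒮 : #𝒮 = n.choose k := by simp [𝒮, n]
  have hinter : ∀ T, #(S ∩ T) ≤ k := fun T => hS ▸ card_le_card inter_subset_left
  -- overlaps smaller than `r` share no hyperedge and contribute `1` each
  have hsmall : ∑ T ∈ 𝒮 with ¬ r ≤ #(S ∩ T), b ^ (#(S ∩ T)).choose r ≤ n.choose k := by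
    calc ∑ T ∈ 𝒮 with ¬ r ≤ #(S ∩ T), b ^ (#(S ∩ T)).choose r
        = #{T ∈ 𝒮 | ¬ r ≤ #(S ∩ T)} := by
          rw [card_eq_sum_ones, Nat.cast_sum]
          refine sum_congr rfl fun T hT => ?_
          rw [Nat.choose_eq_zero_of_lt (by simpa using (mem_filter.1 hT).2)]; simp
      _ ≤ n.choose k := by exact_mod_cast (card_filter_le _ _).trans h𝒮.le
  have hlarge : ∑ T ∈ 𝒮 with r ≤ #(S ∩ T), b ^ (#(S ∩ T)).choose r ≤ n.choose k * (k * y ^ 2) := by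
    rw [← sum_fiberwise_of_maps_to (g := fun T => #(S ∩ T)) (t := Icc r k)
      (fun T hT => mem_Icc.2 ⟨(mem_filter.1 hT).2, hinter T⟩)]
    calc _ ≤ ∑ i ∈ Icc r k, (n.choose k : ℝ) * y ^ 2 := by
          refine sum_le_sum fun i hi => ?_
          obtain ⟨hri, hik⟩ := mem_Icc.1 hi
          rw [sum_congr rfl fun T hT => by rw [(mem_filter.1 hT).2], sum_const, nsmul_eq_mul]
          have hfiber : #{T ∈ {T ∈ 𝒮 | r ≤ #(S ∩ T)} | #(S ∩ T) = i} ≤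
              k.choose i * n.choose (k - i) := by
            have h := card_filter_card_inter_eq_le S k i
            rw [hS] at h
            refine (card_le_card fun T hT => ?_).trans h
            simp only [mem_filter] at hT ⊢
            exact ⟨hT.1.1, hT.2⟩
          calc _ ≤ (k.choose i * n.choose (k - i) : ℝ) * b ^ i.choose r := by
                gcongr; exact_mod_cast hfiber
            _ ≤ n.choose k * y ^ i := choose_mul_choose_mul_pow_le hb hkn (by omega) hik
            _ ≤ n.choose k * y ^ 2 := by
                gcongr ?_ * ?_; exact pow_le_pow_of_le_one hy0 hy (by omega)
      _ ≤ n.choose k * (k * y ^ 2) := by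
          rw [sum_const, Nat.card_Icc, nsmul_eq_mul, mul_left_comm]
          gcongr
          exact_mod_cast (by omega : k + 1 - r ≤ k)
  rw [← sum_filter_add_sum_filter_not 𝒮 (fun T => r ≤ #(S ∩ T))]
  linarith

/-- `E e = true` says that `e` is a hyperedge; only the coordinates at `r`-sets matter. -/
def IsIndepSet {V : Type*} (r : ℕ) (E : Finset V → Bool) (S : Finset V) : Prop :=
  ∀ e ∈ S.powersetCard r, E e = false

section IsIndepSet

variable {V : Type*} [Fintype V] {q : ℝ≥0} {k r : ℕ}

theorem bernoulliPi_real_isIndepSet (hq : q ≤ 1) (S : Finset V) :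
    (bernoulliPi (Finset V) q hq).real {E | IsIndepSet r E S} = (1 - q : ℝ) ^ (#S).choose r := by
  rw [← card_powersetCard]
  exact bernoulliPi_real_forall_eq_false _

theorem bernoulliPi_real_isIndepSet_inter [DecidableEq V] (hq : q < 1) {S T : Finset V}
    (hS : #S = k) (hT : #T = k) :
    (bernoulliPi (Finset V) q hq.le).real ({E | IsIndepSet r E S} ∩ {E | IsIndepSet r E T}) =
      (1 - q : ℝ) ^ (2 * k.choose r) * (1 / (1 - q)) ^ (#(S ∩ T)).choose r := by
  have hq' : (1 - q : ℝ) ≠ 0 := sub_ne_zero.2 (by exact_mod_cast hq.ne')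
  have hunion : {E | IsIndepSet r E S} ∩ {E | IsIndepSet r E T} =
      {E : Finset V → Bool | ∀ e ∈ S.powersetCard r ∪ T.powersetCard r, E e = false} := by
    ext E; simp [IsIndepSet, or_imp, forall_and]
  have hcard := card_union_add_card_inter (S.powersetCard r) (T.powersetCard r)
  rw [powersetCard_inter, card_powersetCard, card_powersetCard, card_powersetCard, hS, hT] at hcard
  rw [hunion, bernoulliPi_real_forall_eq_false, two_mul, ← hcard, pow_add, mul_assoc, ← mul_pow,
    mul_one_div_cancel hq', one_pow, mul_one]

theorem one_sub_le_measureReal_exists_isIndepSet [DecidableEq V] (hq : q < 1) (hr : 2 ≤ r)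
    (hkn : k < Fintype.card V) :
    1 - k * overlapRatio (1 / (1 - q)) (Fintype.card V) k r ^ 2 ≤
      (bernoulliPi (Finset V) q hq.le).real {E | ∃ S, #S = k ∧ IsIndepSet r E S} := by
  set μ := bernoulliPi (Finset V) q hq.le
  set P := μ.real {E | ∃ S, #S = k ∧ IsIndepSet r E S}
  set N : ℝ := Nat.cast ((Fintype.card V).choose k)
  set y := overlapRatio (1 / (1 - q)) (Fintype.card V) k r
  have hP : P ≤ 1 := measureReal_le_one
  have hky : 0 ≤ k * y ^ 2 := by positivity
  by_cases hy : y ≤ 1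
  swap
  -- `y ≠ 0` forces `k ≥ 1`, so the left-hand side is negative
  · have hk : (1 : ℝ) ≤ k := by
      rcases k.eq_zero_or_pos with rfl | hk
      · simp [y, overlapRatio] at hy
      · exact_mod_cast hk
    nlinarith [measureReal_nonneg (μ := μ) (s := {E | ∃ S, #S = k ∧ IsIndepSet r E S})]
  have hq' : (0 : ℝ) < 1 - q := sub_pos.2 (by exact_mod_cast hq)
  set 𝒮 := powersetCard k (univ : Finset V)
  have h𝒮 : (#𝒮 : ℝ) = N := by simp [𝒮, N]
  have hU : ⋃ S ∈ 𝒮, {E | IsIndepSet r E S} = {E | ∃ S, #S = k ∧ IsIndepSet r E S} := by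
    ext E; simp [𝒮]
  have hsecond : (N * (1 - q : ℝ) ^ k.choose r) ^ 2 ≤
      P * (N * ((1 - q : ℝ) ^ (2 * k.choose r) * (N * (1 + k * y ^ 2)))) :=
    calc (N * (1 - q : ℝ) ^ k.choose r) ^ 2 = (∑ S ∈ 𝒮, μ.real {E | IsIndepSet r E S}) ^ 2 := by
          rw [sum_congr rfl fun S hS => (mem_powersetCard.1 hS).2 ▸ bernoulliPi_real_isIndepSet _ S,
            sum_const, nsmul_eq_mul, h𝒮]
      _ ≤ P * ∑ S ∈ 𝒮, ∑ T ∈ 𝒮, μ.real ({E | IsIndepSet r E S} ∩ {E | IsIndepSet r E T}) := by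
          refine (sq_sum_measureReal_le_measureReal_biUnion_mul μ 𝒮 fun _ =>
            (Set.toFinite _).measurableSet).trans_eq ?_
          rw [hU]
      _ ≤ P * ∑ S ∈ 𝒮, (1 - q : ℝ) ^ (2 * k.choose r) * (N * (1 + k * y ^ 2)) := by
          gcongr with S hS
          rw [sum_congr rfl fun T hT => bernoulliPi_real_isIndepSet_inter hq
            (mem_powersetCard.1 hS).2 (mem_powersetCard.1 hT).2, ← mul_sum]
          gcongr
          exact sum_pow_choose_card_inter_le (one_le_one_div hq' (by simp)) hr hkn hy
            (mem_powersetCard.1 hS).2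
      _ = P * (N * ((1 - q : ℝ) ^ (2 * k.choose r) * (N * (1 + k * y ^ 2)))) := by
          rw [sum_const, nsmul_eq_mul, h𝒮]
  have hN : 0 < N := by simp only [N]; exact_mod_cast Nat.choose_pos hkn.le
  have hPy : 1 ≤ P * (1 + k * y ^ 2) := by
    refine le_of_mul_le_mul_left (a := (N * (1 - q : ℝ) ^ k.choose r) ^ 2) ?_ (by positivity)
    exact le_of_eq_of_le (by ring) (hsecond.trans_eq (by ring))
  nlinarith

end IsIndepSet

theorem eventually_two_mul_le_of_le_mul_log {k : ℕ → ℕ} {C : ℝ}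
    (hk : ∀ᶠ n in atTop, (k n : ℝ) ≤ C * Real.log n) : ∀ᶠ n in atTop, 2 * k n ≤ n := by
  have hlog : ∀ᶠ x : ℝ in atTop, ‖2 * C * Real.log x‖ ≤ 1 * ‖x‖ :=
    (Real.isLittleO_log_id_atTop.const_mul_left (2 * C)).bound one_pos
  filter_upwards [hk, tendsto_natCast_atTop_atTop.eventually hlog] with n hkn hn
  rw [one_mul, Real.norm_natCast] at hn
  have := (le_abs_self _).trans hn
  exact_mod_cast (by linarith : (2 * k n : ℝ) ≤ n)

theorem tendsto_mul_overlapRatio_sq {b θ C : ℝ} {r : ℕ} {k : ℕ → ℕ} (hb0 : 0 ≤ b) (hθ : θ < 1)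
    (hk : ∀ᶠ n in atTop, (k n : ℝ) ≤ C * Real.log n)
    (hb : ∀ᶠ n in atTop, b ^ ((k n).choose r / k n : ℝ) ≤ (n : ℝ) ^ θ) :
    Tendsto (fun n => k n * overlapRatio b n (k n) r ^ 2) atTop (𝓝 0) := by
  have hlim : Tendsto (fun n : ℕ => 4 * C ^ 5 * (Real.log n ^ (5 : ℝ) / (n : ℝ) ^ (2 - 2 * θ)))
      atTop (𝓝 0) := by
    simpa using ((isLittleO_log_rpow_rpow_atTop 5 (by linarith : 0 < 2 - 2 * θ)
      ).tendsto_div_nhds_zero.comp tendsto_natCast_atTop_atTop).const_mul (4 * C ^ 5)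
  refine squeeze_zero' (Eventually.of_forall fun n => by positivity) ?_ hlim
  filter_upwards [hk, hb, eventually_two_mul_le_of_le_mul_log hk, eventually_ge_atTop 1]
    with n hkn hbn h2k hn
  have hn0 : (0 : ℝ) < n := by exact_mod_cast hn
  have hnk : (n : ℝ) / 2 ≤ n - k n := by
    have : (2 * k n : ℝ) ≤ n := by exact_mod_cast h2k
    linarith
  have hB := Real.rpow_nonneg hb0 ((k n).choose r / k n : ℝ)
  have hpow : ((n : ℝ) ^ θ) ^ 2 * (n : ℝ) ^ (2 - 2 * θ) = n ^ 2 := by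
    rw [sq, ← Real.rpow_add hn0, ← Real.rpow_add hn0, show θ + θ + (2 - 2 * θ) = 2 by ring,
      Real.rpow_two]
  calc (k n : ℝ) * overlapRatio b n (k n) r ^ 2
      = k n ^ 5 * (b ^ ((k n).choose r / k n : ℝ)) ^ 2 / (n - k n) ^ 2 := by
        rw [overlapRatio, div_pow, mul_pow, ← pow_mul]; ring
    _ ≤ k n ^ 5 * ((n : ℝ) ^ θ) ^ 2 / (n / 2) ^ 2 := by gcongr
    _ = 4 * k n ^ 5 / (n : ℝ) ^ (2 - 2 * θ) := by
        rw [div_pow, ← hpow]; field_simp; ring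
    _ ≤ 4 * (C * Real.log n) ^ 5 / (n : ℝ) ^ (2 - 2 * θ) := by gcongr
    _ = 4 * C ^ 5 * (Real.log n ^ (5 : ℝ) / (n : ℝ) ^ (2 - 2 * θ)) := by
        rw [Real.rpow_ofNat]; ring

noncomputable def indepScale (b : ℝ) (r n : ℕ) : ℝ :=
  ((r ! : ℝ) * Real.logb b n) ^ ((1 : ℝ) / (r - 1))

section indepScale

variable {b : ℝ} {r : ℕ}

theorem indepScale_pow (hb : 1 < b) (hr : 2 ≤ r) (n : ℕ) :
    indepScale b r n ^ (r - 1) = r ! * Real.logb b n := by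
  have hL : 0 ≤ (r ! : ℝ) * Real.logb b n :=
    mul_nonneg (Nat.cast_nonneg _) (div_nonneg (Real.log_natCast_nonneg n) (Real.log_nonneg hb.le))
  have hr' : ((r - 1 : ℕ) : ℝ) = r - 1 := by rw [Nat.cast_sub (by omega), Nat.cast_one]
  have hr1 : (r : ℝ) - 1 ≠ 0 := by rw [← hr']; exact_mod_cast (by omega : r - 1 ≠ 0)
  rw [indepScale, ← Real.rpow_natCast, ← Real.rpow_mul hL, hr', one_div_mul_cancel hr1,
    Real.rpow_one]

theorem tendsto_indepScale_atTop (hb : 1 < b) (hr : 2 ≤ r) :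
    Tendsto (fun n : ℕ => indepScale b r n) atTop atTop := by
  have hr1 : (0 : ℝ) < 1 / (r - 1) := one_div_pos.2 (by rw [sub_pos]; exact_mod_cast hr)
  exact (tendsto_rpow_atTop hr1).comp <|
    ((Real.tendsto_logb_atTop hb).comp tendsto_natCast_atTop_atTop).const_mul_atTop (by positivity)

theorem indepScale_le_of_one_le (hr : 2 ≤ r) {n : ℕ} (h : 1 ≤ (r ! : ℝ) * Real.logb b n) :
    indepScale b r n ≤ r ! * Real.logb b n := by
  refine Real.rpow_le_self_of_one_le h ?_
  rw [div_le_one (by rw [sub_pos]; exact_mod_cast hr)]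
  have : (2 : ℝ) ≤ r := by exact_mod_cast hr
  linarith

theorem rpow_choose_div_le_of_le_mul_indepScale (hb : 1 < b) (hr : 2 ≤ r) {θ : ℝ} (hθ0 : 0 ≤ θ)
    (hθ1 : θ ≤ 1) {n k : ℕ} (hn : 0 < n) (hk : (k : ℝ) ≤ θ * indepScale b r n) :
    b ^ ((k.choose r : ℝ) / k) ≤ (n : ℝ) ^ θ := by
  have hfac : (0 : ℝ) < r ! := by exact_mod_cast r.factorial_pos
  have hexp : (k.choose r : ℝ) / k ≤ θ * Real.logb b n := by
    calc (k.choose r : ℝ) / k ≤ k ^ (r - 1) / r ! := by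
          rcases k.eq_zero_or_pos with rfl | hk0
          · simp; positivity
          rw [div_le_div_iff₀ (by exact_mod_cast hk0) hfac, ← pow_succ,
            Nat.sub_add_cancel (by omega), ← le_div_iff₀ hfac]
          exact Nat.choose_le_pow_div r k
      _ ≤ (θ * indepScale b r n) ^ (r - 1) / r ! := by gcongr
      _ = θ ^ (r - 1) * Real.logb b n := by
          rw [mul_pow, indepScale_pow hb hr]; field_simp
      _ ≤ θ * Real.logb b n := by
          gcongr
          · exact div_nonneg (Real.log_natCast_nonneg n) (Real.log_nonneg hb.le)
          · exact pow_le_of_le_one hθ0 hθ1 (by omega)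
  calc b ^ ((k.choose r : ℝ) / k) ≤ b ^ (θ * Real.logb b n) :=
        Real.rpow_le_rpow_of_exponent_le hb.le hexp
    _ = (n : ℝ) ^ θ := by
        rw [mul_comm, Real.rpow_mul (by linarith),
          Real.rpow_logb (by linarith) hb.ne' (by exact_mod_cast hn)]

theorem eventually_le_mul_log_of_le_indepScale (hb : 1 < b) (hr : 2 ≤ r) {θ : ℝ} (hθ : θ ≤ 1)
    {k : ℕ → ℕ} (hk : ∀ᶠ n in atTop, (k n : ℝ) ≤ θ * indepScale b r n) :
    ∀ᶠ n in atTop, (k n : ℝ) ≤ (r ! / Real.log b) * Real.log n := by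
  have hL := (Real.tendsto_logb_atTop hb).comp tendsto_natCast_atTop_atTop
  filter_upwards [hk, (hL.const_mul_atTop (by positivity : (0 : ℝ) < r !)).eventually_ge_atTop 1]
    with n hkn hLn
  have hM : 0 ≤ indepScale b r n := Real.rpow_nonneg (zero_le_one.trans hLn) _
  calc (k n : ℝ) ≤ indepScale b r n := hkn.trans (mul_le_of_le_one_left hM hθ)
    _ ≤ r ! * Real.logb b n := indepScale_le_of_one_le hr hLn
    _ = (r ! / Real.log b) * Real.log n := by rw [Real.logb]; ring

end indepScale

theorem eventually_natCeil_mul_le {α : Type*} {l : Filter α} {f : α → ℝ} (hf : Tendsto f l atTop)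
    {a c : ℝ} (ha : 0 ≤ a) (hac : a < c) : ∀ᶠ x in l, (⌈a * f x⌉₊ : ℝ) ≤ c * f x := by
  filter_upwards [hf.eventually_ge_atTop 0, hf.eventually_ge_atTop (1 / (c - a))] with x hx0 hx
  have := Nat.ceil_lt_add_one (mul_nonneg ha hx0)
  have : 1 ≤ (c - a) * f x := by rwa [div_le_iff₀' (by linarith)] at hx
  nlinarith

/-- With `b = 1/(1-p)` and `α_ε = (1−ε)·(r!·log_b n)^{1/(r−1)}`, whp as `n → ∞` the
random `r`-uniform hypergraph `H_r(n,p)` contains an independent set of size at least `α_ε`. -/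
theorem stmt_3 (p ε : ℝ) (hp : 0 < p) (hp1 : p < 1) (hε : 0 < ε) (hε1 : ε < 1)
    (r : ℕ) (hr : 2 ≤ r) (hple : ENNReal.ofReal p ≤ 1) :
    Tendsto
      (fun n : ℕ =>
        Measure.pi (fun _ : Finset (Fin n) => (PMF.bernoulli (Real.toNNReal p) (ENNReal.coe_le_one_iff.mp hple)).toMeasure)
          {E : Finset (Fin n) → Bool |
            ∃ S : Finset (Fin n),
              (∀ e ∈ S.powerset, e.card = r → E e = false) ∧
              (S.card : ℝ) ≥
                (1 - ε) * ((r.factorial : ℝ) * Real.logb (1 / (1 - p)) n) ^ ((1 : ℝ) / (r - 1))})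
      atTop (nhds 1) := by
  set b : ℝ := 1 / (1 - p)
  have hb : 1 < b := by rw [lt_div_iff₀ (by linarith)]; linarith
  have hq : Real.toNNReal p < 1 := by rwa [Real.toNNReal_lt_one]
  set k : ℕ → ℕ := fun n => ⌈(1 - ε) * indepScale b r n⌉₊
  have hkM : ∀ᶠ n in atTop, (k n : ℝ) ≤ (1 - ε / 2) * indepScale b r n :=
    eventually_natCeil_mul_le (tendsto_indepScale_atTop hb hr) (by linarith) (by linarith)
  have hklog := eventually_le_mul_log_of_le_indepScale hb hr (by linarith) hkM
  have hkpow : ∀ᶠ n in atTop, b ^ ((k n).choose r / k n : ℝ) ≤ (n : ℝ) ^ (1 - ε / 2) := by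
    filter_upwards [hkM, eventually_gt_atTop 0] with n hkn hn
    exact rpow_choose_div_le_of_le_mul_indepScale hb hr (by linarith) (by linarith) hn hkn
  refine tendsto_measure_of_one_sub_le _
    (tendsto_mul_overlapRatio_sq (by positivity) (by linarith) hklog hkpow) ?_
  filter_upwards [eventually_two_mul_le_of_le_mul_log hklog, eventually_gt_atTop 0] with n h2k hn
  have h := one_sub_le_measureReal_exists_isIndepSet (V := Fin n) hq hr
    (k := k n) (by rw [Fintype.card_fin]; omega)
  rw [Fintype.card_fin, Real.coe_toNNReal _ hp.le] at h
  refine h.trans (measureReal_mono fun E ⟨S, hS, hSE⟩ => ⟨S, fun e he her => hSE e ?_, ?_⟩)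
  · exact mem_powersetCard.2 ⟨mem_powerset.1 he, her⟩
  · rw [hS]; exact Nat.le_ceil _
end

section
/- Consider a greedy process where, conditioned on the current independent set having size i−1, each newly sampled vertex is accepted independently with probability q_i = (1−p)^{C(i−1, r−1)}, so the waiting time Δ_i to grow from size i−1 to i is stochastically dominated by a Geometric(q_i) random variable. If Δ_1, …, Δ_k are such waiting times with this domination holding conditionally on the past, then P[Δ_1 + ⋯ + Δ_k ≤ n] ≥ (1 − (1 − (1−p)^{C(k−1,r−1)})^{n/k})^k. -/
open MeasureTheory
open scoped ENNReal

/-- Greedy waiting times: if, conditionally on the past, each waiting time `Δ_{i+1}` is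
dominated by a `Geom((1-p)^{C(i,r-1)})` variable (expressed via the conditional bound on the
events `{Δ_j ≤ n/k}`), then `P[Δ_1 + ⋯ + Δ_k ≤ n] ≥ (1 − (1 − (1−p)^{C(k−1,r−1)})^{n/k})^k`. -/
theorem stmt_6 {Ω : Type*} [MeasurableSpace Ω] (μ : Measure Ω) [IsProbabilityMeasure μ]
    (p : ℝ) (hp : 0 < p) (hp1 : p < 1) (r k n : ℕ) (hr : 2 ≤ r) (hk : 1 ≤ k) (hn : 1 ≤ n)
    (Δ : ℕ → Ω → ℕ)
    (hdom : ∀ i < k,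
      μ {ω | ∀ j < i + 1, Δ j ω ≤ n / k} ≥
        ENNReal.ofReal (1 - (1 - (1 - p) ^ (i.choose (r - 1))) ^ (n / k)) *
          μ {ω | ∀ j < i, Δ j ω ≤ n / k}) :
    μ {ω | ∑ j ∈ Finset.range k, Δ j ω ≤ n} ≥
      ENNReal.ofReal ((1 - (1 - (1 - p) ^ ((k - 1).choose (r - 1))) ^ (n / k)) ^ k) := by
  set m := n / k with hm
  set a : ℕ → ℝ := fun c => 1 - (1 - (1 - p) ^ (c.choose (r - 1))) ^ m with ha
  have hx0 : (0:ℝ) < 1 - p := by linarith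
  have hx1 : (1:ℝ) - p ≤ 1 := by linarith
  have hbase : ∀ c : ℕ, 0 ≤ 1 - (1 - p) ^ c ∧ 1 - (1 - p) ^ c ≤ 1 := by
    intro c
    constructor
    · have := pow_le_one₀ hx0.le hx1 (n := c)
      linarith
    · have := pow_pos hx0 c
      linarith
  -- each a j for j ≤ k-1 is at least a (k-1)
  have hamono : ∀ j, j ≤ k - 1 → a (k - 1) ≤ a j := by
    intro j hj
    have hch : j.choose (r - 1) ≤ (k - 1).choose (r - 1) := Nat.choose_le_choose _ hj
    have h1 : (1 - p) ^ ((k - 1).choose (r - 1)) ≤ (1 - p) ^ (j.choose (r - 1)) :=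
      pow_le_pow_of_le_one hx0.le hx1 hch
    have h2 : (1 - (1 - p) ^ (j.choose (r - 1))) ^ m ≤
        (1 - (1 - p) ^ ((k - 1).choose (r - 1))) ^ m := by
      apply pow_le_pow_left₀ (hbase _).1 (by linarith)
    simp only [ha]
    linarith
  -- induction lower bound
  have hind : ∀ i, i ≤ k →
      ∏ j ∈ Finset.range i, ENNReal.ofReal (a j) ≤ μ {ω | ∀ j < i, Δ j ω ≤ m} := by
    intro i
    induction i with
    | zero =>
      intro _
      simp [Set.eq_univ_iff_forall.2 (fun ω => by simp : ∀ ω : Ω, ω ∈ {ω | ∀ j < 0, Δ j ω ≤ m})]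
    | succ i ih =>
      intro hik
      have hik' : i < k := hik
      have hdi := hdom i hik'
      calc ∏ j ∈ Finset.range (i+1), ENNReal.ofReal (a j)
          = ENNReal.ofReal (a i) * ∏ j ∈ Finset.range i, ENNReal.ofReal (a j) := by
            rw [Finset.prod_range_succ, mul_comm]
        _ ≤ ENNReal.ofReal (a i) * μ {ω | ∀ j < i, Δ j ω ≤ m} :=
            mul_le_mul_right (ih hik'.le) _
        _ ≤ μ {ω | ∀ j < i + 1, Δ j ω ≤ m} := hdi
  have hsub : {ω | ∀ j < k, Δ j ω ≤ m} ⊆ {ω | ∑ j ∈ Finset.range k, Δ j ω ≤ n} := by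
    intro ω hω
    have : ∑ j ∈ Finset.range k, Δ j ω ≤ ∑ j ∈ Finset.range k, m :=
      Finset.sum_le_sum fun j hj => hω j (Finset.mem_range.mp hj)
    simp only [Finset.sum_const, Finset.card_range, smul_eq_mul] at this
    calc ∑ j ∈ Finset.range k, Δ j ω ≤ k * m := this
      _ ≤ n := by rw [hm]; exact Nat.mul_div_le n k
  have ha0 : 0 ≤ a (k - 1) := by
    have : (1 - (1 - p) ^ ((k-1).choose (r - 1))) ^ m ≤ 1 :=
      pow_le_one₀ (hbase _).1 (hbase _).2
    simp only [ha]; linarith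
  calc ENNReal.ofReal ((a (k-1)) ^ k)
      = ENNReal.ofReal (a (k-1)) ^ k := ENNReal.ofReal_pow ha0 k
    _ = ∏ j ∈ Finset.range k, ENNReal.ofReal (a (k-1)) := by
        rw [Finset.prod_const, Finset.card_range]
    _ ≤ ∏ j ∈ Finset.range k, ENNReal.ofReal (a j) := by
        apply Finset.prod_le_prod' (fun j hj => ?_)
        exact ENNReal.ofReal_le_ofReal (hamono j (Nat.le_sub_one_of_lt (Finset.mem_range.mp hj)))
    _ ≤ μ {ω | ∀ j < k, Δ j ω ≤ m} := hind k le_rfl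
    _ ≤ μ {ω | ∑ j ∈ Finset.range k, Δ j ω ≤ n} := measure_mono hsub
end

section
/- Let X = (m−1)·(C(s₀,r) − s₀·L) − Σ_{i=1}^m (C(a_i,r) − a_i·L) where L = log_b n, s₀ = (1−ε/2)·((r−1)!·L)^{1/(r−1)}, and each a_i ≥ (1+ε)·((r−1)!·L)^{1/(r−1)}. If m = C·ε^{−2} for a sufficiently large constant C (depending only on r), then for all large n, X ≤ −c·L^{r/(r−1)} for some constant c > 0. -/
/-!
Write `L = log_b n` and let `K = ((r-1)! L)^{1/(r-1)}`, so that `r! L = r K^{r-1}`. Up to errors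
of order `K^{r-1}`, the term `r! (C(x,r) - x L)` is `x^r - r K^{r-1} x`, which is increasing for
`x ≥ K` and equals `K^r (t^r - r t)` at `x = t K`. The profile `t^r - r t` is minimal at `t = 1`,
and second-order expansions show that it is smaller at `1 - ε/2` than at `1 + ε` by about
`r² ε²`. So each `a_i`-term beats the `s₀`-term by order `ε² K^r`; once `m ε²` is large, this
`m`-fold gain dominates both the errors and the single surplus `s₀`-term (at most `r K^r`),
leaving `X ≤ -K L ≤ -L^{r/(r-1)}`.
-/

open Filter

theorem quadratic_le_one_add_pow {x : ℝ} (hx : 0 ≤ x) (n : ℕ) :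
    1 + n * x + n.choose 2 * x ^ 2 ≤ (1 + x) ^ n := by
  induction n with
  | zero => simp
  | succ k ih =>
    have hstep : (1 + k * x + k.choose 2 * x ^ 2) * (1 + x) ≤ (1 + x) ^ (k + 1) := by
      rw [pow_succ]; exact mul_le_mul_of_nonneg_right ih (by linarith)
    have hcube : 0 ≤ (k.choose 2 : ℝ) * x ^ 3 := by positivity
    rw [Nat.choose_succ_succ', Nat.choose_one_right]
    push_cast
    nlinarith

theorem one_sub_pow_le_quadratic {x : ℝ} (hx : 0 ≤ x) (hx1 : x ≤ 1) (n : ℕ) :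
    (1 - x) ^ n ≤ 1 - n * x + n.choose 2 * x ^ 2 := by
  induction n with
  | zero => simp
  | succ k ih =>
    have hstep : (1 - x) ^ (k + 1) ≤ (1 - k * x + k.choose 2 * x ^ 2) * (1 - x) := by
      rw [pow_succ]; exact mul_le_mul_of_nonneg_right ih (by linarith)
    have hcube : 0 ≤ (k.choose 2 : ℝ) * x ^ 3 := by positivity
    rw [Nat.choose_succ_succ', Nat.choose_one_right]
    push_cast
    nlinarith

theorem pow_sub_pow_le_mul_pow_pred {x y : ℝ} (hy : 0 ≤ y) (hyx : y ≤ x) (n : ℕ) :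
    x ^ n - y ^ n ≤ n * x ^ (n - 1) * (x - y) := by
  have h := abs_pow_sub_pow_le x y n
  rw [abs_of_nonneg (sub_nonneg.2 (pow_le_pow_left₀ hy hyx n)), abs_of_nonneg (sub_nonneg.2 hyx),
    abs_of_nonneg (hy.trans hyx), abs_of_nonneg hy, max_eq_left hyx] at h
  linarith

theorem mul_pow_pred_le_pow_sub_pow {x y : ℝ} (hy : 0 ≤ y) (hyx : y ≤ x) (n : ℕ) :
    n * y ^ (n - 1) * (x - y) ≤ x ^ n - y ^ n := by
  rw [← geom_sum₂_mul x y n]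
  refine mul_le_mul_of_nonneg_right ?_ (sub_nonneg.2 hyx)
  calc n * y ^ (n - 1) = ∑ _i ∈ Finset.range n, y ^ (n - 1) := by simp
    _ ≤ ∑ i ∈ Finset.range n, x ^ i * y ^ (n - 1 - i) := by
      refine Finset.sum_le_sum fun i hi => ?_
      calc y ^ (n - 1) = y ^ i * y ^ (n - 1 - i) := by
            rw [← pow_add, Nat.add_sub_cancel' (Nat.le_sub_one_of_lt (Finset.mem_range.1 hi))]
        _ ≤ x ^ i * y ^ (n - 1 - i) := by gcongr

theorem factorial_mul_choose_le_pow (n r : ℕ) : (r.factorial * n.choose r : ℝ) ≤ n ^ r := by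
  exact_mod_cast (Nat.descFactorial_eq_factorial_mul_choose n r).symm.trans_le
    (n.descFactorial_le_pow r)

theorem sub_pow_le_factorial_mul_choose {n r : ℕ} (h : r ≤ n) :
    ((n : ℝ) - r) ^ r ≤ r.factorial * n.choose r := by
  rw [← Nat.cast_sub h]
  exact_mod_cast ((Nat.pow_le_pow_left (by omega) r).trans (n.pow_sub_le_descFactorial r)).trans_eq
    (Nat.descFactorial_eq_factorial_mul_choose n r)

/-- When `K^{r-1} = (r-1)! L`, this is the real relaxation of `r! (C(x,r) - x L)`. -/
def tiltedPow (r : ℕ) (K x : ℝ) : ℝ := x ^ r - r * K ^ (r - 1) * x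

section tiltedPow

variable {r : ℕ} {K : ℝ}

theorem tiltedPow_mul_self (hr : r ≠ 0) (t : ℝ) :
    tiltedPow r K (t * K) = K ^ r * (t ^ r - r * t) := by
  obtain ⟨k, rfl⟩ := Nat.exists_eq_succ_of_ne_zero hr
  simp only [tiltedPow, Nat.succ_sub_one, mul_pow, pow_succ]
  ring

theorem tiltedPow_monotoneOn (hK : 0 ≤ K) : MonotoneOn (tiltedPow r K) (Set.Ici K) := by
  intro y hy x _ hyx
  have htangent := mul_pow_pred_le_pow_sub_pow (hK.trans hy) hyx r
  have hpow : r * K ^ (r - 1) * (x - y) ≤ r * y ^ (r - 1) * (x - y) := by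
    gcongr
    exact hy
  simp only [tiltedPow]
  linarith

theorem factorial_mul_choose_sub_le_tiltedPow (hK : 0 ≤ K) {s : ℕ} {u : ℝ} (hsu : s ≤ u)
    (hus : u - 1 ≤ s) :
    r.factorial * s.choose r - r * K ^ (r - 1) * s ≤ tiltedPow r K u + r * K ^ (r - 1) := by
  have hchoose := factorial_mul_choose_le_pow s r
  have hpow : (s : ℝ) ^ r ≤ u ^ r := pow_le_pow_left₀ s.cast_nonneg hsu r
  have hlin : r * K ^ (r - 1) * (u - 1) ≤ r * K ^ (r - 1) * s := by gcongr
  simp only [tiltedPow]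
  linarith

theorem tiltedPow_sub_le_factorial_mul_choose (hK : 0 ≤ K) {v : ℝ} {a : ℕ} (hKv : K + r ≤ v)
    (hva : v ≤ a) :
    tiltedPow r K v - r ^ 2 * v ^ (r - 1) ≤ r.factorial * a.choose r - r * K ^ (r - 1) * a := by
  have hra : r ≤ a := by exact_mod_cast (show (r : ℝ) ≤ a by linarith)
  have hchoose := sub_pow_le_factorial_mul_choose hra
  have hmono : tiltedPow r K (v - r) ≤ tiltedPow r K (a - r) :=
    tiltedPow_monotoneOn hK (by simp only [Set.mem_Ici]; linarith)
      (by simp only [Set.mem_Ici]; linarith) (by linarith)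
  have hshift := pow_sub_pow_le_mul_pow_pred (x := v) (y := v - r) (by linarith) (by linarith) r
  simp only [tiltedPow] at hmono ⊢
  linarith

theorem tiltedPow_sub_tiltedPow_le (hr : 2 ≤ r) (hK : 0 ≤ K) {ε : ℝ} (hε : 0 ≤ ε) (hε2 : ε ≤ 2) :
    tiltedPow r K ((1 - ε / 2) * K) - tiltedPow r K ((1 + ε) * K) ≤
      -(3 / 8 * r * ε ^ 2 * K ^ r) := by
  have hbelow := one_sub_pow_le_quadratic (x := ε / 2) (by linarith) (by linarith) r
  have habove := quadratic_le_one_add_pow hε r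
  have hchoose : (r : ℝ) / 2 ≤ r.choose 2 := by
    rw [Nat.cast_choose_two]
    nlinarith [show (2 : ℝ) ≤ r by exact_mod_cast hr]
  have hprofile : (1 - ε / 2) ^ r - r * (1 - ε / 2) - ((1 + ε) ^ r - r * (1 + ε)) ≤
      -(3 / 8 * r * ε ^ 2) := by
    nlinarith [sq_nonneg ε]
  rw [tiltedPow_mul_self (by omega), tiltedPow_mul_self (by omega), ← mul_sub]
  calc _ ≤ K ^ r * -(3 / 8 * r * ε ^ 2) :=
        mul_le_mul_of_nonneg_left hprofile (pow_nonneg hK r)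
    _ = _ := by ring

theorem neg_tiltedPow_mul_self_le (hr : r ≠ 0) (hK : 0 ≤ K) {t : ℝ} (ht0 : 0 ≤ t) (ht1 : t ≤ 1) :
    -tiltedPow r K (t * K) ≤ r * K ^ r := by
  rw [tiltedPow_mul_self hr]
  have hKr : 0 ≤ K ^ r := pow_nonneg hK r
  nlinarith [mul_nonneg hKr (pow_nonneg ht0 r), mul_nonneg hKr (sub_nonneg.2 ht1)]

end tiltedPow

theorem factorial_mul_exponent_le {r m : ℕ} (hr : 2 ≤ r) {ε K : ℝ} (hε : 0 < ε) (hε1 : ε ≤ 1)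
    (hm : 8 ≤ m * ε ^ 2) (hK : 8 * (1 + r * 2 ^ (r - 1)) ≤ ε ^ 2 * K) {s₀ : ℕ} {a : Fin m → ℕ}
    (hs₀l : (1 - ε / 2) * K - 1 ≤ s₀) (hs₀u : s₀ ≤ (1 - ε / 2) * K)
    (ha : ∀ i, (1 + ε) * K ≤ a i) :
    (m - 1) * (r.factorial * s₀.choose r - r * K ^ (r - 1) * s₀) -
        ∑ i, (r.factorial * (a i).choose r - r * K ^ (r - 1) * a i) ≤ -(r * K ^ r) := by
  have hK0 : 0 < K := by
    have : (0 : ℝ) < ε ^ 2 * K := by linarith [show (0 : ℝ) ≤ r * 2 ^ (r - 1) by positivity]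
    exact pos_of_mul_pos_right this (sq_nonneg ε)
  have hP0 : 0 ≤ K ^ (r - 1) := pow_nonneg hK0.le _
  have hKr : K ^ r = K ^ (r - 1) * K := (pow_sub_one_mul (by omega) K).symm
  have hm1 : (1 : ℝ) ≤ m := by nlinarith
  have hεK : K + r ≤ (1 + ε) * K := by
    have : ε ^ 2 * K ≤ ε * K := mul_le_mul_of_nonneg_right (by nlinarith) hK0.le
    have : (r : ℝ) ≤ r * 2 ^ (r - 1) :=
      le_mul_of_one_le_right r.cast_nonneg (one_le_pow₀ one_le_two)
    linarith
  have hcore := factorial_mul_choose_sub_le_tiltedPow (r := r) hK0.le hs₀u hs₀l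
  have hsum : (m : ℝ) * (tiltedPow r K ((1 + ε) * K) - r ^ 2 * ((1 + ε) * K) ^ (r - 1)) ≤
      ∑ i, (r.factorial * (a i).choose r - r * K ^ (r - 1) * a i) := by
    simpa using Finset.card_nsmul_le_sum Finset.univ _ _ fun i _ =>
      tiltedPow_sub_le_factorial_mul_choose hK0.le hεK (ha i)
  have hgap := tiltedPow_sub_tiltedPow_le hr hK0.le hε.le (by linarith)
  have hu := neg_tiltedPow_mul_self_le (r := r) (by omega) hK0.le (t := 1 - ε / 2)
    (by linarith) (by linarith)
  rw [hKr] at hgap hu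
  have hv : ((1 + ε) * K) ^ (r - 1) ≤ 2 ^ (r - 1) * K ^ (r - 1) := by
    rw [mul_pow]; gcongr; linarith
  have hs₀term := mul_le_mul_of_nonneg_left hcore (by linarith : (0 : ℝ) ≤ m - 1)
  have hgap_m := mul_le_mul_of_nonneg_left hgap m.cast_nonneg
  have hv_m := mul_le_mul_of_nonneg_left hv (by positivity : (0 : ℝ) ≤ m * r ^ 2)
  have herr := mul_le_mul_of_nonneg_left hK (by positivity : (0 : ℝ) ≤ m * r * K ^ (r - 1))
  have hm_scaled := mul_le_mul_of_nonneg_right hm (by positivity : (0 : ℝ) ≤ r * (K ^ (r - 1) * K))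
  have hc0 : 0 ≤ r * K ^ (r - 1) := by positivity
  rw [hKr]
  linarith

/-- The exponent `X`, with `L = log_b n`. -/
def coreExponent (r : ℕ) (L : ℝ) (s₀ : ℕ) {m : ℕ} (a : Fin m → ℕ) : ℝ :=
  ((m : ℝ) - 1) * ((s₀.choose r : ℝ) - (s₀ : ℝ) * L) -
    ∑ i : Fin m, (((a i).choose r : ℝ) - (a i : ℝ) * L)

theorem coreExponent_le {r m : ℕ} (hr : 2 ≤ r) {ε K L : ℝ} (hε : 0 < ε) (hε1 : ε ≤ 1)
    (hm : 8 ≤ m * ε ^ 2) (hK : 8 * (1 + r * 2 ^ (r - 1)) ≤ ε ^ 2 * K)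
    (hKL : K ^ (r - 1) = (r - 1).factorial * L) {s₀ : ℕ} {a : Fin m → ℕ}
    (hs₀l : (1 - ε / 2) * K - 1 ≤ s₀) (hs₀u : s₀ ≤ (1 - ε / 2) * K)
    (ha : ∀ i, (1 + ε) * K ≤ a i) :
    coreExponent r L s₀ a ≤ -(K * L) := by
  have hfact : (r.factorial : ℝ) = r * (r - 1).factorial := by
    exact_mod_cast (Nat.mul_factorial_pred (by omega : r ≠ 0)).symm
  have hscaled := factorial_mul_exponent_le hr hε hε1 hm hK hs₀l hs₀u ha
  rw [← pow_sub_one_mul (by omega : r ≠ 0) K, hKL] at hscaled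
  refine le_of_mul_le_mul_left ?_ (Nat.cast_pos.2 r.factorial_pos : (0 : ℝ) < r.factorial)
  calc (r.factorial : ℝ) * coreExponent r L s₀ a = _ := by
        rw [coreExponent, mul_sub, Finset.mul_sum, hfact]
        congr 1
        · ring
        · exact Finset.sum_congr rfl fun i _ => by ring
    _ ≤ _ := hscaled
    _ = _ := by rw [hfact]; ring

theorem rpow_one_div_sub_one_pow {r : ℕ} (hr : 2 ≤ r) {x : ℝ} (hx : 0 ≤ x) :
    (x ^ ((1 : ℝ) / (r - 1))) ^ (r - 1) = x := by
  have hcast : (r : ℝ) - 1 = ((r - 1 : ℕ) : ℝ) := by rw [Nat.cast_sub (by omega)]; simp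
  rw [hcast, one_div, Real.rpow_inv_natCast_pow hx (by omega)]

theorem rpow_div_sub_one_le {r : ℕ} (hr : 2 ≤ r) {D L : ℝ} (hD : 1 ≤ D) (hL : 0 < L) :
    L ^ ((r : ℝ) / (r - 1)) ≤ (D * L) ^ ((1 : ℝ) / (r - 1)) * L := by
  have hr1 : (0 : ℝ) < r - 1 := by
    have : (2 : ℝ) ≤ r := by exact_mod_cast hr
    linarith
  have hexp : (r : ℝ) / (r - 1) = (1 : ℝ) / (r - 1) + 1 := by field_simp; ring
  rw [hexp, Real.rpow_add hL, Real.rpow_one]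
  gcongr
  exact le_mul_of_one_le_left hL.le hD

/-- Let `L = log_b n`, `s₀ = ⌊(1−ε/2)·((r−1)!·L)^{1/(r−1)}⌋` and `a_i ≥ (1+ε)·((r−1)!·L)^{1/(r−1)}`.
If `m ≥ C·ε^{−2}` for a sufficiently large constant `C` (depending only on `r`, `p`), then for all
large `n` the exponent `X = (m−1)(C(s₀,r) − s₀L) − Σ_i (C(a_i,r) − a_i L)` satisfies
`X ≤ −c·L^{r/(r−1)}` for some `c > 0`. -/
theorem stmt_11 (p : ℝ) (hp : 0 < p) (hp1 : p < 1) (r : ℕ) (hr : 2 ≤ r) :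
    ∃ C > 0, ∃ ε₀ > 0, ∀ ε : ℝ, 0 < ε → ε ≤ ε₀ → ∀ m : ℕ, C / ε ^ 2 ≤ (m : ℝ) →
      ∃ c > 0, ∀ᶠ n : ℕ in atTop,
        ∀ (s₀ : ℕ) (a : Fin m → ℕ),
          ((1 - ε / 2) *
              (((r - 1).factorial : ℝ) * Real.logb (1 / (1 - p)) n) ^ ((1 : ℝ) / (r - 1)) - 1
            ≤ (s₀ : ℝ)) →
          ((s₀ : ℝ) ≤
            (1 - ε / 2) *
              (((r - 1).factorial : ℝ) * Real.logb (1 / (1 - p)) n) ^ ((1 : ℝ) / (r - 1))) →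
          (∀ i : Fin m, (a i : ℝ) ≥
            (1 + ε) *
              (((r - 1).factorial : ℝ) * Real.logb (1 / (1 - p)) n) ^ ((1 : ℝ) / (r - 1))) →
          ((m : ℝ) - 1) * ((s₀.choose r : ℝ) - (s₀ : ℝ) * Real.logb (1 / (1 - p)) n) -
              ∑ i : Fin m,
                (((a i).choose r : ℝ) - (a i : ℝ) * Real.logb (1 / (1 - p)) n) ≤
            -c * (Real.logb (1 / (1 - p)) n) ^ ((r : ℝ) / (r - 1)) := by
  have hD : (1 : ℝ) ≤ (r - 1).factorial := by exact_mod_cast (r - 1).factorial_pos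
  have hlog : Tendsto (fun n : ℕ => Real.logb (1 / (1 - p)) n) atTop atTop :=
    (Real.tendsto_logb_atTop (one_lt_one_div (by linarith) (by linarith))).comp
      tendsto_natCast_atTop_atTop
  have hK : Tendsto (fun n : ℕ => (((r - 1).factorial : ℝ) * Real.logb (1 / (1 - p)) n) ^
      ((1 : ℝ) / (r - 1))) atTop atTop := by
    refine (tendsto_rpow_atTop (one_div_pos.2 ?_)).comp (hlog.const_mul_atTop (by linarith))
    linarith [show (2 : ℝ) ≤ r by exact_mod_cast hr]
  refine ⟨8, by norm_num, 1, one_pos, fun ε hε hε1 m hm => ⟨1, one_pos, ?_⟩⟩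
  have hmε : 8 ≤ m * ε ^ 2 := by rwa [div_le_iff₀ (by positivity)] at hm
  filter_upwards [hlog.eventually_gt_atTop 0,
    hK.eventually_ge_atTop (8 * (1 + r * 2 ^ (r - 1)) / ε ^ 2)] with n hL hKlarge
  intro s₀ a hs₀l hs₀u ha
  calc _ ≤ _ := coreExponent_le hr hε hε1 hmε (by rwa [div_le_iff₀' (by positivity)] at hKlarge)
        (rpow_one_div_sub_one_pow hr (by positivity)) hs₀l hs₀u ha
    _ ≤ _ := by linarith [rpow_div_sub_one_le hr hD hL]
end

section
/- Let τ be a stopping time taking values in {1,…,N}, and for each T let F_T be the revealed-information σ-algebra with {τ = T} ∈ F_T. Let E_{1,T}, …, E_{m,T} be events that are conditionally independent given F_T, each with the same conditional probability P[E_{1,T} | F_T]. Then P[∪_T ({τ=T} ∩ E_{1,T} ∩ ⋯ ∩ E_{m,T})] ≥ (Σ_T P[{τ=T} ∩ E_{1,T}])^m. -/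
/-!
Glue the conditional probabilities into one random variable `h ω = g (τ ω) ω`. Since the
fibres `{τ = T}` partition `Ω`, the two sides of the inequality are `∫ h ^ m` and `(∫ h) ^ m`,
and Jensen's inequality for the convex map `x ↦ x ^ m` on `[0, ∞)` compares them.
-/

open MeasureTheory Set

section Fibres

variable {Ω ι : Type*} [MeasurableSpace Ω] [MeasurableSpace ι] [MeasurableSingletonClass ι]
  {τ : Ω → ι}

theorem Measurable.select [Countable ι] {β : Type*} [MeasurableSpace β] (hτ : Measurable τ)
    {F : ι → Ω → β} (hF : ∀ i, Measurable (F i)) : Measurable fun ω => F (τ ω) ω :=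
  (measurable_from_prod_countable_left (f := fun p : Ω × ι => F p.2 p.1) hF).comp
    (measurable_id.prodMk hτ)

theorem sum_setIntegral_fiber_eq_integral {E : Type*} [NormedAddCommGroup E] [NormedSpace ℝ E]
    {μ : Measure Ω} (hτ : Measurable τ) {s : Finset ι} (hs : ∀ ω, τ ω ∈ s) {F : ι → Ω → E}
    (hF : Integrable (fun ω => F (τ ω) ω) μ) :
    ∑ i ∈ s, ∫ ω in τ ⁻¹' {i}, F i ω ∂μ = ∫ ω, F (τ ω) ω ∂μ := by
  have h_fibre (i : ι) : ∫ ω in τ ⁻¹' {i}, F i ω ∂μ = ∫ ω in τ ⁻¹' {i}, F (τ ω) ω ∂μ :=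
    setIntegral_congr_fun (hτ (measurableSet_singleton i)) fun ω hω => by rw [hω]
  have h_cover : ⋃ i ∈ s, τ ⁻¹' {i} = univ := by
    rw [Finset.set_biUnion_preimage_singleton, eq_univ_iff_forall]
    exact hs
  simp_rw [h_fibre]
  rw [← integral_biUnion_finset s (fun i _ => hτ (measurableSet_singleton i))
    (pairwiseDisjoint_fiber τ _) (fun i _ => hF.integrableOn), h_cover, setIntegral_univ]

theorem measureReal_biUnion_fiber_inter {μ : Measure Ω} [IsFiniteMeasure μ] (hτ : Measurable τ)
    {s : Finset ι} {B : ι → Set Ω} (hB : ∀ i ∈ s, MeasurableSet (B i)) :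
    μ.real (⋃ i ∈ s, τ ⁻¹' {i} ∩ B i) = ∑ i ∈ s, μ.real (τ ⁻¹' {i} ∩ B i) :=
  measureReal_biUnion_finset ((pairwiseDisjoint_fiber τ _).mono fun _ => inter_subset_left)
    fun i hi => (hτ (measurableSet_singleton i)).inter (hB i hi)

end Fibres

theorem pow_integral_le_integral_pow {Ω : Type*} [MeasurableSpace Ω] {μ : Measure Ω}
    [IsProbabilityMeasure μ] {f : Ω → ℝ} (hf0 : ∀ᵐ ω ∂μ, 0 ≤ f ω) (hf : Integrable f μ) (m : ℕ)
    (hfm : Integrable (fun ω => f ω ^ m) μ) : (∫ ω, f ω ∂μ) ^ m ≤ ∫ ω, f ω ^ m ∂μ :=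
  (convexOn_pow m).map_integral_le (continuous_pow m).continuousOn isClosed_Ici hf0 hf hfm

theorem stmt_13_general {Ω : Type*} [MeasurableSpace Ω] (μ : Measure Ω) [IsProbabilityMeasure μ]
    (N m : ℕ) (τ : Ω → ℕ) (hτmeas : Measurable τ)
    (hτ : ∀ ω, τ ω ∈ Finset.Icc 1 N)
    (E : ℕ → ℕ → Set Ω) (hE : ∀ i T, MeasurableSet (E i T))
    (g : ℕ → Ω → ℝ) (hgmeas : ∀ T, Measurable (g T))
    (hg0 : ∀ T ω, 0 ≤ g T ω) (hg1 : ∀ T ω, g T ω ≤ 1)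
    (hprod : ∀ T ∈ Finset.Icc 1 N,
      (μ ({ω | τ ω = T} ∩ ⋂ i ∈ Finset.range m, E i T)).toReal =
        ∫ ω in {ω | τ ω = T}, (g T ω) ^ m ∂μ)
    (hone : ∀ T ∈ Finset.Icc 1 N,
      (μ ({ω | τ ω = T} ∩ E 0 T)).toReal = ∫ ω in {ω | τ ω = T}, g T ω ∂μ) :
    (μ (⋃ T ∈ Finset.Icc 1 N, ({ω | τ ω = T} ∩ ⋂ i ∈ Finset.range m, E i T))).toReal ≥
      (∑ T ∈ Finset.Icc 1 N, (μ ({ω | τ ω = T} ∩ E 0 T)).toReal) ^ m := by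
  have h_int (k : ℕ) : Integrable (fun ω => g (τ ω) ω ^ k) μ :=
    .of_mem_Icc 0 1 ((hτmeas.select hgmeas).pow_const k).aemeasurable <| ae_of_all _ fun ω =>
      ⟨pow_nonneg (hg0 _ ω) k, pow_le_one₀ (hg0 _ ω) (hg1 _ ω)⟩
  have h_int_one : Integrable (fun ω => g (τ ω) ω) μ := by simpa using h_int 1
  have h_lhs : (μ (⋃ T ∈ Finset.Icc 1 N, ({ω | τ ω = T} ∩ ⋂ i ∈ Finset.range m, E i T))).toReal =
      ∫ ω, g (τ ω) ω ^ m ∂μ := by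
    refine (measureReal_biUnion_fiber_inter hτmeas fun T _ =>
      .biInter (Finset.range m).countable_toSet fun i _ => hE i T).trans
      ((Finset.sum_congr rfl hprod).trans ?_)
    exact sum_setIntegral_fiber_eq_integral (F := fun T ω => g T ω ^ m) hτmeas hτ (h_int m)
  have h_rhs : ∑ T ∈ Finset.Icc 1 N, (μ ({ω | τ ω = T} ∩ E 0 T)).toReal =
      ∫ ω, g (τ ω) ω ∂μ :=
    (Finset.sum_congr rfl hone).trans (sum_setIntegral_fiber_eq_integral hτmeas hτ h_int_one)
  rw [h_lhs, h_rhs, ge_iff_le]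
  exact pow_integral_le_integral_pow (ae_of_all _ fun ω => hg0 _ ω) h_int_one m (h_int m)

/-- Jensen lower bound for correlated instances: if `τ ∈ {1,…,N}` is a stopping time and, on
`{τ = T}`, the events `E_{0,T},…,E_{m−1,T}` are conditionally independent given the revealed
information with common conditional probability `g_T ∈ [0,1]` (expressed through the two
integral identities below), then
`P[⋃_T ({τ=T} ∩ E_{0,T} ∩ ⋯ ∩ E_{m−1,T})] ≥ (Σ_T P[{τ=T} ∩ E_{0,T}])^m`. -/
theorem stmt_13 {Ω : Type*} [MeasurableSpace Ω] (μ : Measure Ω) [IsProbabilityMeasure μ]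
    (N m : ℕ) (hm : 1 ≤ m) (τ : Ω → ℕ) (hτmeas : Measurable τ)
    (hτ : ∀ ω, τ ω ∈ Finset.Icc 1 N)
    (E : ℕ → ℕ → Set Ω) (hE : ∀ i T, MeasurableSet (E i T))
    (g : ℕ → Ω → ℝ) (hgmeas : ∀ T, Measurable (g T))
    (hg0 : ∀ T ω, 0 ≤ g T ω) (hg1 : ∀ T ω, g T ω ≤ 1)
    (hprod : ∀ T ∈ Finset.Icc 1 N,
      (μ ({ω | τ ω = T} ∩ ⋂ i ∈ Finset.range m, E i T)).toReal =
        ∫ ω in {ω | τ ω = T}, (g T ω) ^ m ∂μ)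
    (hone : ∀ T ∈ Finset.Icc 1 N,
      (μ ({ω | τ ω = T} ∩ E 0 T)).toReal = ∫ ω in {ω | τ ω = T}, g T ω ∂μ) :
    (μ (⋃ T ∈ Finset.Icc 1 N, ({ω | τ ω = T} ∩ ⋂ i ∈ Finset.range m, E i T))).toReal ≥
      (∑ T ∈ Finset.Icc 1 N, (μ ({ω | τ ω = T} ∩ E 0 T)).toReal) ^ m :=
  stmt_13_general μ N m τ hτmeas hτ E hE g hgmeas hg0 hg1 hprod hone
end

section
/- Let b = 1/(1−p), fix r ≥ 2, γ ∈ (0,1)^r with Σγ_i = 1, ε > 0, and α_STAT = (log_b n / ∏_i γ_i)^{1/(r−1)}. If α ≥ (1+ε)·α_STAT, then the expected number of γ-balanced independent sets of size α in H(r,n,p) (with respect to the identity permutation) is at most exp(−c·ε·α·log n) for some constant c > 0 and all large n; in particular it tends to 0. -/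
/-!
The expected count is at most `n ^ α · (1 - p) ^ (∏ γ_i · α ^ r) = exp (α log n - B ∏ γ_i · α ^ r)`
with `B = -log (1 - p)`, since `C(n, k) ≤ n ^ k` and the part sizes add up to `α`. Raising the
hypothesis on `α` to the power `r - 1` and using Bernoulli's inequality
`(1 + ε) ^ (r - 1) ≥ 1 + (r - 1) ε` gives `B ∏ γ_i · α ^ r ≥ (1 + (r - 1) ε) α log n`, so the
exponent is at most `-(r - 1) ε α log n`: one can take `c = r - 1`. The bound tends to `0`
because `α → ∞` along with `log_b n`.
-/

open Filter Finset Real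

section BalancedSizes

variable {ι : Type*} [Fintype ι] {γ : ι → ℝ} {k : ι → ℕ} {a : ℕ}

theorem sum_eq_of_cast_eq_mul (hsum : ∑ i, γ i = 1) (hk : ∀ i, (k i : ℝ) = γ i * a) :
    ∑ i, k i = a := by
  have : ((∑ i, k i : ℕ) : ℝ) = a := by
    push_cast
    simp only [hk, ← Finset.sum_mul, hsum, one_mul]
  exact_mod_cast this

theorem cast_prod_eq_prod_mul_pow (hk : ∀ i, (k i : ℝ) = γ i * a) :
    ((∏ i, k i : ℕ) : ℝ) = (∏ i, γ i) * (a : ℝ) ^ Fintype.card ι := by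
  push_cast
  simp only [hk, Finset.prod_mul_distrib, Finset.prod_const, Finset.card_univ]

end BalancedSizes

theorem prod_choose_mul_pow_le_exp {ι : Type*} (s : Finset ι) (k : ι → ℕ) {n : ℕ} (hn : 0 < n)
    {q : ℝ} (hq : 0 < q) (N : ℕ) :
    (∏ i ∈ s, (n.choose (k i) : ℝ)) * q ^ N ≤
      exp ((∑ i ∈ s, k i : ℕ) * log n + N * log q) := by
  have hchoose : ∏ i ∈ s, (n.choose (k i) : ℝ) ≤ (n : ℝ) ^ (∑ i ∈ s, k i) := by
    rw [← Finset.prod_pow_eq_pow_sum]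
    gcongr with i
    exact_mod_cast Nat.choose_le_pow n (k i)
  rw [exp_add, exp_nat_mul, exp_nat_mul, exp_log (by positivity), exp_log hq]
  gcongr

theorem one_add_mul_mul_le_pow_of_mul_rpow_le {x a ε : ℝ} {m : ℕ} (hm : m ≠ 0) (hx : 0 ≤ x)
    (hε : -1 ≤ ε) (h : (1 + ε) * x ^ (1 / m : ℝ) ≤ a) :
    (1 + m * ε) * x ≤ a ^ m :=
  calc (1 + m * ε) * x ≤ (1 + ε) ^ m * x := by
        gcongr
        exact one_add_mul_le_pow (by linarith) m
    _ = ((1 + ε) * x ^ (1 / m : ℝ)) ^ m := by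
        rw [mul_pow, ← rpow_natCast (x ^ _), ← rpow_mul hx, one_div_mul_cancel (by positivity),
          rpow_one]
    _ ≤ a ^ m := by
        gcongr
        exact mul_nonneg (by linarith) (by positivity)

theorem mul_sub_mul_pow_succ_le {a L B P ε : ℝ} {m : ℕ} (hm : m ≠ 0) (hL : 0 ≤ L) (hB : 0 < B)
    (hP : 0 < P) (hε : -1 ≤ ε) (ha : (1 + ε) * (L / B / P) ^ (1 / m : ℝ) ≤ a) :
    a * L - B * P * a ^ (m + 1) ≤ -(m * ε * a * L) := by
  have ha0 : 0 ≤ a := le_trans (mul_nonneg (by linarith) (by positivity)) ha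
  have key := one_add_mul_mul_le_pow_of_mul_rpow_le hm (by positivity) hε ha
  have : (1 + m * ε) * a * L ≤ B * P * a ^ (m + 1) := by
    calc (1 + m * ε) * a * L = B * P * a * ((1 + m * ε) * (L / B / P)) := by
          field_simp
      _ ≤ B * P * a * a ^ m := by gcongr
      _ = B * P * a ^ (m + 1) := by ring
  linarith

theorem tendsto_mul_logb_div_rpow_atTop {b C P t : ℝ} (hb : 1 < b) (hC : 0 < C) (hP : 0 < P)
    (ht : 0 < t) : Tendsto (fun x : ℝ => C * (logb b x / P) ^ t) atTop atTop :=
  ((tendsto_rpow_atTop ht).comp ((tendsto_logb_atTop hb).atTop_div_const hP)).const_mul_atTop hC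

theorem prod_choose_mul_pow_le_exp_of_le {r : ℕ} (hr : 2 ≤ r) {p ε : ℝ} (hp : 0 < p) (hp1 : p < 1)
    (hε : -1 ≤ ε) {γ : Fin r → ℝ} (hγ : ∀ i, 0 < γ i) (hsum : ∑ i, γ i = 1) {n a : ℕ}
    (hn : 0 < n) {k : Fin r → ℕ} (hk : ∀ i, (k i : ℝ) = γ i * a)
    (ha : (1 + ε) * (logb (1 / (1 - p)) n / ∏ i, γ i) ^ ((1 : ℝ) / (r - 1)) ≤ a) :
    (∏ i, (n.choose (k i) : ℝ)) * (1 - p) ^ (∏ i, k i) ≤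
      exp (-(r - 1) * ε * a * log n) := by
  obtain ⟨m, rfl⟩ : ∃ m, r = m + 1 := ⟨r - 1, by omega⟩
  have hB : 0 < -log (1 - p) := neg_pos.mpr (log_neg (by linarith) (by linarith))
  have hlogb : logb (1 / (1 - p)) n = log n / -log (1 - p) := by rw [one_div, logb, log_inv]
  have hm : ((m + 1 : ℕ) : ℝ) - 1 = m := by push_cast; ring
  rw [hlogb, hm] at ha
  have hexponent := mul_sub_mul_pow_succ_le (by omega) (log_natCast_nonneg n) hB
    (Finset.prod_pos fun i _ => hγ i) hε ha
  calc (∏ i, (n.choose (k i) : ℝ)) * (1 - p) ^ (∏ i, k i)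
      ≤ exp ((∑ i, k i : ℕ) * log n + (∏ i, k i : ℕ) * log (1 - p)) :=
        prod_choose_mul_pow_le_exp _ k hn (by linarith) _
    _ ≤ exp (-((m + 1 : ℕ) - 1) * ε * a * log n) := by
        rw [sum_eq_of_cast_eq_mul hsum hk, cast_prod_eq_prod_mul_pow hk, Fintype.card_fin, hm]
        gcongr
        linarith

/-- With `b = 1/(1−p)` and `α_STAT = (log_b n / ∏_i γ_i)^{1/(r−1)}`, if `α ≥ (1+ε)·α_STAT`
then the expected number `(∏_i C(n, γ_i α))·(1−p)^{α^r·∏_i γ_i}` of `γ`-balanced independent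
sets of size `α` in `H(r,n,p)` (identity permutation) is eventually at most
`exp(−c·ε·α·log n)` for some `c > 0`; in particular it tends to `0`. -/
theorem stmt_15 (p ε : ℝ) (hp : 0 < p) (hp1 : p < 1) (hε : 0 < ε) (r : ℕ) (hr : 2 ≤ r)
    (γ : Fin r → ℝ) (hγ : ∀ i, 0 < γ i ∧ γ i < 1) (hsum : ∑ i, γ i = 1)
    (α : ℕ → ℕ) (k : ℕ → Fin r → ℕ) (hk : ∀ n i, (k n i : ℝ) = γ i * α n)
    (hα : ∀ n : ℕ, 2 ≤ n → (α n : ℝ) ≥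
      (1 + ε) * (Real.logb (1 / (1 - p)) n / ∏ i, γ i) ^ ((1 : ℝ) / (r - 1))) :
    ∃ c > 0,
      (∀ᶠ n : ℕ in atTop,
        (∏ i, (n.choose (k n i) : ℝ)) * (1 - p) ^ (∏ i, k n i) ≤
          Real.exp (-c * ε * (α n : ℝ) * Real.log n)) ∧
      Tendsto (fun n : ℕ => (∏ i, (n.choose (k n i) : ℝ)) * (1 - p) ^ (∏ i, k n i))
        atTop (nhds 0) := by
  have hr1 : (0 : ℝ) < r - 1 := by
    have : (2 : ℝ) ≤ r := by exact_mod_cast hr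
    linarith
  have hbound : ∀ᶠ n : ℕ in atTop, (∏ i, (n.choose (k n i) : ℝ)) * (1 - p) ^ (∏ i, k n i) ≤
      exp (-(r - 1) * ε * α n * log n) := by
    filter_upwards [eventually_ge_atTop 2] with n hn
    exact prod_choose_mul_pow_le_exp_of_le hr hp hp1 (by linarith) (fun i => (hγ i).1) hsum
      (by omega) (hk n) (hα n hn)
  refine ⟨r - 1, hr1, hbound, ?_⟩
  have hb : (1 : ℝ) < 1 / (1 - p) := by rw [lt_div_iff₀ (by linarith)]; linarith
  have hα_top : Tendsto (fun n => (α n : ℝ)) atTop atTop :=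
    tendsto_atTop_mono' _ ((eventually_ge_atTop 2).mono hα)
      ((tendsto_mul_logb_div_rpow_atTop hb (by linarith) (Finset.prod_pos fun i _ => (hγ i).1)
        (by positivity)).comp tendsto_natCast_atTop_atTop)
  have hexp_zero : Tendsto (fun n : ℕ => exp (-(r - 1) * ε * α n * log n)) atTop (nhds 0) := by
    have hlog := tendsto_log_atTop.comp tendsto_natCast_atTop_atTop
    refine tendsto_exp_atBot.comp (((hα_top.atTop_mul_atTop₀ hlog).const_mul_atTop_of_neg
      (by nlinarith : -(r - 1) * ε < (0 : ℝ))).congr fun n => ?_)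
    simp only [Function.comp_apply]
    ring
  exact tendsto_of_tendsto_of_tendsto_of_le_of_le' tendsto_const_nhds hexp_zero
    (Eventually.of_forall fun n => by positivity) hbound
end

section
/- Fix r ≥ 2 and reals m_1, …, m_r with 1 ≤ m_i ≤ γ_i·α for each i, where γ_i > 0, Σγ_i = 1, and α^{r−1} = (1−ε)^{r−1}·(log_b n)/∏_j γ_j. Then (Σ_{i=1}^r m_i)/(∏_{i=1}^r m_i) ≥ 1/(α^{r−1}·∏_j γ_j) = (1+ε')/log_b n, where ε' = (1−ε)^{−(r−1)} − 1 > 0. -/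
/-!
Since `(∑ i, m i) / ∏ i, m i = ∑ i, 1 / ∏_{j ≠ i} m j`, the left-hand side can only decrease
when every `m j` is raised to its upper bound `γ j * α`; at that point the `i`-th term is
`γ i / (α ^ (r - 1) * ∏ j, γ j)`, and `∑ i, γ i = 1` sums these to the bound.
-/

open Finset

theorem sum_div_prod_eq_sum_inv_prod_erase {ι K : Type*} [DecidableEq ι] [Field K]
    (s : Finset ι) {m : ι → K} (hm : ∀ i ∈ s, m i ≠ 0) :
    (∑ i ∈ s, m i) / ∏ i ∈ s, m i = ∑ i ∈ s, (∏ j ∈ s.erase i, m j)⁻¹ := by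
  rw [sum_div]
  refine sum_congr rfl fun i hi => ?_
  rw [← mul_prod_erase s m hi, div_mul_cancel_left₀ (hm i hi)]

theorem sum_inv_prod_erase_le_of_le {ι K : Type*} [DecidableEq ι] [Field K] [LinearOrder K]
    [IsStrictOrderedRing K] (s : Finset ι) {m c : ι → K} (hm : ∀ i ∈ s, 0 < m i)
    (hmc : ∀ i ∈ s, m i ≤ c i) :
    ∑ i ∈ s, (∏ j ∈ s.erase i, c j)⁻¹ ≤ ∑ i ∈ s, (∏ j ∈ s.erase i, m j)⁻¹ :=
  sum_le_sum fun _ _ =>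
    inv_anti₀ (prod_pos fun j hj => hm j (mem_of_mem_erase hj))
      (prod_le_prod (fun j hj => (hm j (mem_of_mem_erase hj)).le)
        fun j hj => hmc j (mem_of_mem_erase hj))

theorem inv_prod_erase_mul_const {ι K : Type*} [Fintype ι] [DecidableEq ι] [Field K]
    {γ : ι → K} (hγ : ∀ i, γ i ≠ 0) (α : K) (i : ι) :
    (∏ j ∈ univ.erase i, γ j * α)⁻¹ = γ i / (α ^ (Fintype.card ι - 1) * ∏ j, γ j) := by
  rw [prod_mul_distrib, prod_const, card_erase_of_mem (mem_univ i), card_univ,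
    ← mul_prod_erase univ γ (mem_univ i), mul_left_comm, div_mul_cancel_left₀ (hγ i), mul_comm]

theorem stmt_16_general (r : ℕ) (b : ℝ) (n : ℕ)
    (γ : Fin r → ℝ) (hγ : ∀ i, 0 < γ i) (hsum : ∑ i, γ i = 1)
    (ε : ℝ)
    (α : ℝ)
    (hα : α ^ (r - 1) = (1 - ε) ^ (r - 1) * Real.logb b n / ∏ j, γ j)
    (m : Fin r → ℝ) (hm : ∀ i, 1 ≤ m i ∧ m i ≤ γ i * α) :
    (∑ i, m i) / (∏ i, m i) ≥ 1 / (α ^ (r - 1) * ∏ j, γ j) ∧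
    1 / (α ^ (r - 1) * ∏ j, γ j) = (1 + (((1 - ε) ^ (r - 1))⁻¹ - 1)) / Real.logb b n := by
  have hm0 : ∀ i, 0 < m i := fun i => one_pos.trans_le (hm i).1
  constructor
  · calc 1 / (α ^ (r - 1) * ∏ j, γ j)
        = ∑ i, (∏ j ∈ univ.erase i, γ j * α)⁻¹ := by
          simp_rw [inv_prod_erase_mul_const (fun i => (hγ i).ne') α, Fintype.card_fin,
            ← sum_div, hsum]
      _ ≤ ∑ i, (∏ j ∈ univ.erase i, m j)⁻¹ :=
          sum_inv_prod_erase_le_of_le univ (fun i _ => hm0 i) fun i _ => (hm i).2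
      _ = (∑ i, m i) / ∏ i, m i :=
          (sum_div_prod_eq_sum_inv_prod_erase univ fun i _ => (hm0 i).ne').symm
  · rw [hα, div_mul_cancel₀ _ (prod_ne_zero_iff.2 fun i _ => (hγ i).ne')]
    ring

/-- For `1 ≤ m_i ≤ γ_i·α` with `α^{r−1} = (1−ε)^{r−1}·log_b n / ∏_j γ_j`:
`(Σ_i m_i)/(∏_i m_i) ≥ 1/(α^{r−1}·∏_j γ_j) = (1+ε')/log_b n` with
`ε' = (1−ε)^{−(r−1)} − 1`. -/
theorem stmt_16 (r : ℕ) (hr : 2 ≤ r) (b : ℝ) (hb : 1 < b) (n : ℕ) (hn : 2 ≤ n)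
    (γ : Fin r → ℝ) (hγ : ∀ i, 0 < γ i) (hsum : ∑ i, γ i = 1)
    (ε : ℝ) (hε : 0 < ε) (hε1 : ε < 1)
    (α : ℝ) (hα0 : 0 < α)
    (hα : α ^ (r - 1) = (1 - ε) ^ (r - 1) * Real.logb b n / ∏ j, γ j)
    (m : Fin r → ℝ) (hm : ∀ i, 1 ≤ m i ∧ m i ≤ γ i * α) :
    (∑ i, m i) / (∏ i, m i) ≥ 1 / (α ^ (r - 1) * ∏ j, γ j) ∧
    1 / (α ^ (r - 1) * ∏ j, γ j) = (1 + (((1 - ε) ^ (r - 1))⁻¹ - 1)) / Real.logb b n :=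
  stmt_16_general r b n γ hγ hsum ε α hα m hm
end

section
/- Fix r ≥ 2, γ_r ∈ [1/r, 1), an integer 1 ≤ s ≤ r, σ_A ≤ s·γ_r, and ε ∈ (0, 1/r²]. Then γ_r·(1+ε)^r·((1−ε)^s − 1) + σ_A·ε·(1+ε) ≤ −((r−1)/4)·ε²·s·γ_r·(1+ε) ≤ −ε²/8. -/
lemma taylor_aux (n : ℕ) (ε : ℝ) (h0 : 0 ≤ ε) (h1 : ε ≤ 1) :
    (1 - ε) ^ n ≤ 1 - n * ε + n * (n - 1) / 2 * ε ^ 2 := by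
  induction n with
  | zero => norm_num
  | succ n ih =>
    have key : (1 - ε) ^ (n + 1) ≤ (1 - n * ε + n * (n - 1) / 2 * ε ^ 2) * (1 - ε) := by
      rw [pow_succ]
      exact mul_le_mul_of_nonneg_right ih (by linarith)
    have hn : (0:ℝ) ≤ (n:ℝ) * ((n:ℝ) - 1) := by
      rcases Nat.eq_zero_or_pos n with h | h
      · simp [h]
      · have : (1:ℝ) ≤ (n:ℝ) := by exact_mod_cast h
        nlinarith
    push_cast
    nlinarith [mul_nonneg hn (pow_nonneg h0 3)]

lemma poly_aux (R S E : ℝ) (h1 : 1 ≤ S) (h2 : S ≤ R) (h3 : 2 ≤ R)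
    (hE : 0 < E) (hE2 : E * R ^ 2 ≤ 1) :
    (1 + (R - 1) * E) * (-(S * E) + S * (S - 1) / 2 * E ^ 2) + S * E ≤
      -((R - 1) / 4) * S * E ^ 2 := by
  have hRE : (R - 1) * E ≤ 1 / 2 := by
    nlinarith [mul_nonneg hE.le (sq_nonneg (R - 1))]
  have hSRE : (S - 1) * ((R - 1) * E) ≤ (S - 1) * (1 / 2) :=
    mul_le_mul_of_nonneg_left hRE (by linarith)
  have hbr : (S - 1) / 2 - 3 * (R - 1) / 4 + (R - 1) * (S - 1) * E / 2 ≤ 0 := by nlinarith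
  have hfin : 0 ≤ S * E ^ 2 * (-((S - 1) / 2 - 3 * (R - 1) / 4 + (R - 1) * (S - 1) * E / 2)) :=
    mul_nonneg (mul_nonneg (by linarith) (sq_nonneg E)) (by linarith)
  nlinarith [hfin]

set_option maxHeartbeats 1000000 in
/-- For `r ≥ 2`, `γ_r ∈ [1/r, 1)`, `1 ≤ s ≤ r`, `σ_A ≤ s·γ_r` and `ε ∈ (0, 1/r²]`:
`γ_r·(1+ε)^r·((1−ε)^s − 1) + σ_A·ε·(1+ε) ≤ −((r−1)/4)·ε²·s·γ_r·(1+ε) ≤ −ε²/8`. -/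
theorem stmt_19 (r s : ℕ) (hr : 2 ≤ r) (hs1 : 1 ≤ s) (hsr : s ≤ r)
    (γr σA ε : ℝ) (hγ1 : 1 / (r : ℝ) ≤ γr) (hγ2 : γr < 1) (hσ : σA ≤ (s : ℝ) * γr)
    (hε : 0 < ε) (hε2 : ε ≤ 1 / (r : ℝ) ^ 2) :
    γr * (1 + ε) ^ r * ((1 - ε) ^ s - 1) + σA * ε * (1 + ε) ≤
      -(((r : ℝ) - 1) / 4) * ε ^ 2 * (s : ℝ) * γr * (1 + ε) ∧
    -(((r : ℝ) - 1) / 4) * ε ^ 2 * (s : ℝ) * γr * (1 + ε) ≤ -ε ^ 2 / 8 := by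
  have hr2 : (2:ℝ) ≤ (r:ℝ) := by exact_mod_cast hr
  have hrpos : (0:ℝ) < r := by linarith
  have hs1' : (1:ℝ) ≤ (s:ℝ) := by exact_mod_cast hs1
  have hsr' : (s:ℝ) ≤ (r:ℝ) := by exact_mod_cast hsr
  have hγpos : 0 < γr := lt_of_lt_of_le (by positivity) hγ1
  have hεr : ε * (r:ℝ)^2 ≤ 1 := by
    have h2 : (0:ℝ) < (r:ℝ)^2 := by positivity
    rw [le_div_iff₀ h2] at hε2
    linarith
  have hε1 : ε ≤ 1 := by nlinarith
  have hε1' : ε < 1 := by nlinarith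
  have h1ε : (0:ℝ) < 1 + ε := by linarith
  -- second inequality
  have hsg : (1:ℝ)/(r:ℝ) ≤ (s:ℝ) * γr := by nlinarith
  have second : -(((r : ℝ) - 1) / 4) * ε ^ 2 * (s : ℝ) * γr * (1 + ε) ≤ -ε ^ 2 / 8 := by
    have key : (1:ℝ)/8 ≤ ((r:ℝ) - 1)/4 * ((s:ℝ) * γr) * (1 + ε) := by
      have h1 : (1:ℝ)/8 ≤ ((r:ℝ)-1)/4 * (1/(r:ℝ)) := by
        rw [div_mul_div_comm, div_le_div_iff₀ (by norm_num) (by positivity)]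
        linarith
      have h2 : ((r:ℝ)-1)/4 * (1/(r:ℝ)) ≤ ((r:ℝ)-1)/4 * ((s:ℝ)*γr) :=
        mul_le_mul_of_nonneg_left hsg (by linarith)
      nlinarith [mul_pos (show (0:ℝ) < ((r:ℝ)-1)/4 * ((s:ℝ)*γr) by nlinarith) hε]
    nlinarith [mul_le_mul_of_nonneg_left key (sq_nonneg ε)]
  refine ⟨?_, second⟩
  -- first inequality
  have hB1 : 1 + ((r:ℝ) - 1) * ε ≤ (1 + ε) ^ (r - 1) := by
    have := one_add_mul_le_pow (by linarith : (-2:ℝ) ≤ ε) (r - 1)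
    have hc : ((r - 1 : ℕ) : ℝ) = (r:ℝ) - 1 := by
      have : 1 ≤ r := by omega
      push_cast [Nat.cast_sub this]; ring
    rw [hc] at this; exact this
  have hB2 : (1 - ε) ^ s ≤ 1 - (s:ℝ) * ε + (s:ℝ) * ((s:ℝ) - 1) / 2 * ε ^ 2 :=
    taylor_aux s ε hε.le hε1
  have hneg : (1 - ε) ^ s - 1 ≤ 0 := by
    have := pow_le_one₀ (by linarith : (0:ℝ) ≤ 1 - ε) (by linarith : (1:ℝ) - ε ≤ 1) (n := s)
    linarith
  have hpowr : (1 + ε) ^ r = (1 + ε) ^ (r - 1) * (1 + ε) := by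
    rw [← pow_succ]
    congr 1
    omega
  have hpowpos : (0:ℝ) < (1 + ε) ^ (r - 1) := by positivity
  have step1 : (1 + ε) ^ (r-1) * ((1 - ε) ^ s - 1) ≤ (1 + ((r:ℝ)-1)*ε) * ((1 - ε) ^ s - 1) :=
    mul_le_mul_of_nonpos_right hB1 hneg
  have step2 : (1 + ((r:ℝ)-1)*ε) * ((1 - ε) ^ s - 1) ≤
      (1 + ((r:ℝ)-1)*ε) * (-( (s:ℝ)*ε) + (s:ℝ)*((s:ℝ)-1)/2*ε^2) := by
    have hp : (0:ℝ) ≤ 1 + ((r:ℝ)-1)*ε := by nlinarith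
    exact mul_le_mul_of_nonneg_left (by linarith) hp
  have hpoly := poly_aux (r:ℝ) (s:ℝ) ε hs1' hsr' hr2 hε hεr
  have chain : (1 + ε) ^ (r-1) * ((1 - ε) ^ s - 1) + (s:ℝ)*ε ≤ -(((r:ℝ)-1)/4) * (s:ℝ) * ε^2 := by
    linarith
  -- multiply by γr*(1+ε) > 0 and add the σA piece
  have hσε : σA * ε * (1 + ε) ≤ (s:ℝ) * γr * ε * (1 + ε) := by
    have : 0 < ε * (1 + ε) := by positivity
    nlinarith
  have hmul : γr * (1 + ε) * ((1 + ε) ^ (r-1) * ((1 - ε) ^ s - 1) + (s:ℝ)*ε) ≤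
      γr * (1 + ε) * (-(((r:ℝ)-1)/4) * (s:ℝ) * ε^2) := by
    apply mul_le_mul_of_nonneg_left chain (by positivity)
  calc γr * (1 + ε) ^ r * ((1 - ε) ^ s - 1) + σA * ε * (1 + ε)
      ≤ γr * (1 + ε) ^ r * ((1 - ε) ^ s - 1) + (s:ℝ) * γr * ε * (1 + ε) := by linarith
    _ = γr * (1 + ε) * ((1 + ε) ^ (r-1) * ((1 - ε) ^ s - 1) + (s:ℝ)*ε) := by
        rw [hpowr]; ring
    _ ≤ γr * (1 + ε) * (-(((r:ℝ)-1)/4) * (s:ℝ) * ε^2) := hmul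
    _ = -(((r : ℝ) - 1) / 4) * ε ^ 2 * (s : ℝ) * γr * (1 + ε) := by ring
end
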